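/- arXiv:2109.11984 — 6 statements merged into one kernel-verified Lean document; each statement's English description precedes it below -/
import Mathlib

section
/- Let R > 0 and n > 0. Define on the domain {(p, ρ, s, θ) : ρ > 0, θ > 0} the functions F(p, ρ, s, θ) = p − Rρθ and G(p, ρ, s, θ) = s − R((n/2) ln θ − ln ρ + n/2). Then the Poisson bracket [F, G] := F_s G_θ − F_θ G_s + ρ²(F_ρ G_p − F_p G_ρ) associated with the symplectic form Ω = ds ∧ dθ + ρ⁻² dρ ∧ dp vanishes identically on this domain. -/
/-!
`F` does not involve `s` and `G` does not involve `p`, so only two terms of the bracket survive: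
`[F, G] = -F_θ G_s - ρ² F_p G_ρ = Rρ - ρ² (R / ρ) = 0`.
-/

/-- The Poisson bracket of `Ω = ds ∧ dθ + ρ⁻² dρ ∧ dp`, in the variables `(p, ρ, s, θ)`. -/
noncomputable def poissonBracket (F G : ℝ → ℝ → ℝ → ℝ → ℝ) (p ρ s θ : ℝ) : ℝ :=
  deriv (fun s' => F p ρ s' θ) s * deriv (fun θ' => G p ρ s θ') θ
    - deriv (fun θ' => F p ρ s θ') θ * deriv (fun s' => G p ρ s' θ) s
    + ρ ^ 2 * (deriv (fun ρ' => F p ρ' s θ) ρ * deriv (fun p' => G p' ρ s θ) p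
      - deriv (fun p' => F p' ρ s θ) p * deriv (fun ρ' => G p ρ' s θ) ρ)

theorem poissonBracket_eq_of_indep_s_p {F G : ℝ → ℝ → ℝ → ℝ → ℝ} {p ρ s θ : ℝ}
    (hF : ∀ s', F p ρ s' θ = F p ρ s θ) (hG : ∀ p', G p' ρ s θ = G p ρ s θ) :
    poissonBracket F G p ρ s θ =
      -(deriv (fun θ' => F p ρ s θ') θ * deriv (fun s' => G p ρ s' θ) s)
        - ρ ^ 2 * (deriv (fun p' => F p' ρ s θ) p * deriv (fun ρ' => G p ρ' s θ) ρ) := by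
  have hFs : deriv (fun s' => F p ρ s' θ) s = 0 := by simp only [hF, deriv_const]
  have hGp : deriv (fun p' => G p' ρ s θ) p = 0 := by simp only [hG, deriv_const]
  rw [poissonBracket, hFs, hGp]
  ring

theorem stmt2_general (R n : ℝ)
    (F G : ℝ → ℝ → ℝ → ℝ → ℝ)
    (hF : ∀ p ρ s θ : ℝ, F p ρ s θ = p - R * ρ * θ)
    (hG : ∀ p ρ s θ : ℝ,
      G p ρ s θ = s - R * ((n / 2) * Real.log θ - Real.log ρ + n / 2)) :
    ∀ p ρ s θ : ℝ, 0 < ρ → 0 < θ →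
      (deriv (fun s' => F p ρ s' θ) s) * (deriv (fun θ' => G p ρ s θ') θ)
        - (deriv (fun θ' => F p ρ s θ') θ) * (deriv (fun s' => G p ρ s' θ) s)
        + ρ ^ 2 * ((deriv (fun ρ' => F p ρ' s θ) ρ) * (deriv (fun p' => G p' ρ s θ) p)
          - (deriv (fun p' => F p' ρ s θ) p) * (deriv (fun ρ' => G p ρ' s θ) ρ)) = 0 := by
  intro p ρ s θ hρ _
  change poissonBracket F G p ρ s θ = 0
  have hFθ : deriv (fun θ' => F p ρ s θ') θ = -(R * ρ) := by simp [hF]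
  have hGs : deriv (fun s' => G p ρ s' θ) s = 1 := by simp [hG]
  have hFp : deriv (fun p' => F p' ρ s θ) p = 1 := by simp [hF]
  have hGρ : deriv (fun ρ' => G p ρ' s θ) ρ = R / ρ := by simp [hG, div_eq_mul_inv]
  rw [poissonBracket_eq_of_indep_s_p (by simp [hF]) (by simp [hG]), hFθ, hGs, hFp, hGρ]
  field_simp
  ring

/-- For the ideal-gas state equations F(p,ρ,s,θ) = p − Rρθ and
G(p,ρ,s,θ) = s − R((n/2)ln θ − ln ρ + n/2), the Poisson bracket
[F,G] = F_s G_θ − F_θ G_s + ρ²(F_ρ G_p − F_p G_ρ) associated with the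
symplectic form Ω = ds ∧ dθ + ρ⁻² dρ ∧ dp vanishes on {ρ > 0, θ > 0}. -/
theorem stmt2 (R n : ℝ) (hR : 0 < R) (hn : 0 < n)
    (F G : ℝ → ℝ → ℝ → ℝ → ℝ)
    (hF : ∀ p ρ s θ : ℝ, F p ρ s θ = p - R * ρ * θ)
    (hG : ∀ p ρ s θ : ℝ,
      G p ρ s θ = s - R * ((n / 2) * Real.log θ - Real.log ρ + n / 2)) :
    ∀ p ρ s θ : ℝ, 0 < ρ → 0 < θ →
      (deriv (fun s' => F p ρ s' θ) s) * (deriv (fun θ' => G p ρ s θ') θ)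
        - (deriv (fun θ' => F p ρ s θ') θ) * (deriv (fun s' => G p ρ s' θ) s)
        + ρ ^ 2 * ((deriv (fun ρ' => F p ρ' s θ) ρ) * (deriv (fun p' => G p' ρ s θ) p)
          - (deriv (fun p' => F p' ρ s θ) p) * (deriv (fun ρ' => G p ρ' s θ) ρ)) = 0 :=
  stmt2_general R n F G hF hG
end

section
/- Let R > 0, k > 0, n > 0, ω > 0, c₁ ≠ 0 and c₂ > 0 be real constants, and let Φ(x, y) = (n/2) ln y − ln x be the ideal-gas Planck potential. On the domain {(x, y) : x > ω/√c₂, y > 0}, the functions L(x, y) = 0, M(x, y) = c₁ x^{1 + 2/n}, K(x, y) = √(c₂x² − ω²), N(x, y) = −(2y/n)√(c₂x² − ω²) satisfy the four equations of the quotient system E_q: (i) xK M_x − N M_y + L N_x + M(N_y − K) = 0; (ii) Rxy(xK(Φ_x + yΦ_xy) − N(2Φ_y + yΦ_yy)) + k(L M_x + M M_y) = 0; (iii) RL·B + xK² L_x − KN L_y − (xKM + LN) K_y − 3LK² − ω²L = 0, where B = xy(Φ_xxx L² + 2Φ_xxy LM + Φ_xyy M²) + (xyL L_x + xyM L_y +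 2xLM + 3yL²)Φ_xx + (xyL M_x + M(xy M_y + 2xM + 3yL))Φ_xy + (2yL L_x + 2yM L_y + xL M_x + M(x M_y + 3L))Φ_x; (iv) x(M K_y − K L_x + L K_x) + N L_y + 2KL = 0. -/
/-!
Since `L = 0` and `M`, `K` do not depend on `y`, equations (iii) and (iv) vanish term by term.
Equation (i) reduces to Euler's relation `x M_x = (1 + 2/n) M` for the homogeneous `M` together
with `N_y = -(2/n) K`, and equation (ii) to `2 Φ_y + y Φ_yy = n / (2y)`, which turns
`N (2 Φ_y + y Φ_yy)` into `-K = x K Φ_x`.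
-/

/-- Partial derivative in the first variable. -/
noncomputable def pdx (f : ℝ → ℝ → ℝ) : ℝ → ℝ → ℝ :=
  fun x y => deriv (fun x' => f x' y) x

/-- Partial derivative in the second variable. -/
noncomputable def pdy (f : ℝ → ℝ → ℝ) : ℝ → ℝ → ℝ :=
  fun x y => deriv (fun y' => f x y') y

section PartialDerivatives

variable {f : ℝ → ℝ → ℝ} {g : ℝ → ℝ}

theorem pdx_of_forall_eq_snd (h : ∀ x y, f x y = g y) (x y : ℝ) : pdx f x y = 0 := by
  simp only [pdx, h, deriv_const]

theorem pdy_of_forall_eq_fst (h : ∀ x y, f x y = g x) (x y : ℝ) : pdy f x y = 0 := by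
  simp only [pdy, h, deriv_const]

theorem pdy_of_forall_eq_snd (h : ∀ x y, f x y = g y) (x y : ℝ) : pdy f x y = deriv g y := by
  simp only [pdy, h]

theorem pdy_of_forall_eq_mul {a x : ℝ} (h : ∀ y, f x y = a * y) (y : ℝ) : pdy f x y = a := by
  simp only [pdy, h, deriv_const_mul_id]

theorem mul_pdx_of_forall_eq_mul_rpow {c p : ℝ} (h : ∀ x y, f x y = c * x ^ p) {x : ℝ}
    (hx : x ≠ 0) (y : ℝ) : x * pdx f x y = p * f x y := by
  simp only [pdx, h, deriv_const_mul_field', Real.deriv_rpow_const, Real.rpow_sub_one hx]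
  field_simp

end PartialDerivatives

section PlanckPotential

variable {n : ℝ} {Φ : ℝ → ℝ → ℝ}

-- `Real.deriv_log` also holds at `0` (both sides are junk `0`), so these formulas are global.
theorem pdx_planck (hΦ : ∀ x y, Φ x y = n / 2 * Real.log y - Real.log x) (x y : ℝ) :
    pdx Φ x y = -x⁻¹ := by
  simp only [pdx, hΦ, deriv_const_sub, Real.deriv_log']

theorem pdy_planck (hΦ : ∀ x y, Φ x y = n / 2 * Real.log y - Real.log x) (x y : ℝ) :
    pdy Φ x y = n / 2 * y⁻¹ := by
  simp only [pdy, hΦ, deriv_sub_const, deriv_const_mul_field', Real.deriv_log']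

theorem pdy_pdx_planck (hΦ : ∀ x y, Φ x y = n / 2 * Real.log y - Real.log x) (x y : ℝ) :
    pdy (pdx Φ) x y = 0 :=
  pdy_of_forall_eq_fst (pdx_planck hΦ) x y

theorem pdy_pdy_planck (hΦ : ∀ x y, Φ x y = n / 2 * Real.log y - Real.log x) (x y : ℝ) :
    pdy (pdy Φ) x y = n / 2 * -(y ^ 2)⁻¹ := by
  simp only [pdy_of_forall_eq_snd (pdy_planck hΦ), deriv_const_mul_field', deriv_inv']

end PlanckPotential

theorem stmt8_general (R k n ω c₁ c₂ : ℝ) (hn : 0 < n) (hω : 0 < ω)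
    (Φ L M K N : ℝ → ℝ → ℝ)
    (hΦ : ∀ x y : ℝ, Φ x y = n / 2 * Real.log y - Real.log x)
    (hL : ∀ x y : ℝ, L x y = 0)
    (hM : ∀ x y : ℝ, M x y = c₁ * x ^ (1 + 2 / n))
    (hK : ∀ x y : ℝ, K x y = Real.sqrt (c₂ * x ^ 2 - ω ^ 2))
    (hN : ∀ x y : ℝ, N x y = -(2 * y / n) * Real.sqrt (c₂ * x ^ 2 - ω ^ 2)) :
    ∀ x y : ℝ, ω / Real.sqrt c₂ < x → 0 < y →
      -- (i)
      (x * K x y * pdx M x y - N x y * pdy M x y + L x y * pdx N x y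
        + M x y * (pdy N x y - K x y) = 0)
      ∧
      -- (ii)
      (R * x * y * (x * K x y * (pdx Φ x y + y * pdy (pdx Φ) x y)
          - N x y * (2 * pdy Φ x y + y * pdy (pdy Φ) x y))
        + k * (L x y * pdx M x y + M x y * pdy M x y) = 0)
      ∧
      -- (iii)
      (R * L x y *
        (x * y * (pdx (pdx (pdx Φ)) x y * (L x y) ^ 2
            + 2 * pdy (pdx (pdx Φ)) x y * (L x y) * (M x y)
            + pdy (pdy (pdx Φ)) x y * (M x y) ^ 2)
          + (x * y * L x y * pdx L x y + x * y * M x y * pdy L x y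
              + 2 * x * L x y * M x y + 3 * y * (L x y) ^ 2) * pdx (pdx Φ) x y
          + (x * y * L x y * pdx M x y
              + M x y * (x * y * pdy M x y + 2 * x * M x y + 3 * y * L x y))
            * pdy (pdx Φ) x y
          + (2 * y * L x y * pdx L x y + 2 * y * M x y * pdy L x y
              + x * L x y * pdx M x y + M x y * (x * pdy M x y + 3 * L x y))
            * pdx Φ x y)
        + x * (K x y) ^ 2 * pdx L x y - K x y * N x y * pdy L x y
        - (x * K x y * M x y + L x y * N x y) * pdy K x y
        - 3 * L x y * (K x y) ^ 2 - ω ^ 2 * L x y = 0)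
      ∧
      -- (iv)
      (x * (M x y * pdy K x y - K x y * pdx L x y + L x y * pdx K x y)
        + N x y * pdy L x y + 2 * K x y * L x y = 0) := by
  intro x y hx hy
  have hx0 : 0 < x := (div_nonneg hω.le (Real.sqrt_nonneg c₂)).trans_lt hx
  have hLx : pdx L x y = 0 := pdx_of_forall_eq_snd (g := fun _ => 0) hL x y
  have hLy : pdy L x y = 0 := pdy_of_forall_eq_fst (g := fun _ => 0) hL x y
  have hMy : pdy M x y = 0 := pdy_of_forall_eq_fst hM x y
  have hKy : pdy K x y = 0 := pdy_of_forall_eq_fst hK x y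
  have hMx : x * pdx M x y = (1 + 2 / n) * M x y := mul_pdx_of_forall_eq_mul_rpow hM hx0.ne' y
  have hNy : pdy N x y = -(2 / n) * K x y :=
    pdy_of_forall_eq_mul (fun y' => by rw [hN, hK]; ring) y
  refine ⟨?_, ?_, ?_, ?_⟩
  · rw [hL, hMy, hNy]
    linear_combination K x y * hMx
  · rw [hL, hMy, hN, ← hK, pdx_planck hΦ, pdy_pdx_planck hΦ, pdy_planck hΦ,
      pdy_pdy_planck hΦ]
    field_simp
    ring
  · rw [hL, hLx, hLy, hKy]
    ring
  · rw [hL, hLx, hLy, hKy]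
    ring

/-- The constant-type solution L = 0, M = c₁x^(1+2/n), K = √(c₂x²−ω²),
N = −(2y/n)√(c₂x²−ω²) of the quotient system E_q of the Euler system on the
curve h(a) = λa² for the ideal-gas Planck potential Φ = (n/2)ln y − ln x,
on the domain {x > ω/√c₂, y > 0}. -/
theorem stmt8 (R k n ω c₁ c₂ : ℝ) (hR : 0 < R) (hk : 0 < k) (hn : 0 < n)
    (hω : 0 < ω) (hc₁ : c₁ ≠ 0) (hc₂ : 0 < c₂)
    (Φ L M K N : ℝ → ℝ → ℝ)
    (hΦ : ∀ x y : ℝ, Φ x y = n / 2 * Real.log y - Real.log x)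
    (hL : ∀ x y : ℝ, L x y = 0)
    (hM : ∀ x y : ℝ, M x y = c₁ * x ^ (1 + 2 / n))
    (hK : ∀ x y : ℝ, K x y = Real.sqrt (c₂ * x ^ 2 - ω ^ 2))
    (hN : ∀ x y : ℝ, N x y = -(2 * y / n) * Real.sqrt (c₂ * x ^ 2 - ω ^ 2)) :
    ∀ x y : ℝ, ω / Real.sqrt c₂ < x → 0 < y →
      -- (i)
      (x * K x y * pdx M x y - N x y * pdy M x y + L x y * pdx N x y
        + M x y * (pdy N x y - K x y) = 0)
      ∧
      -- (ii)
      (R * x * y * (x * K x y * (pdx Φ x y + y * pdy (pdx Φ) x y)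
          - N x y * (2 * pdy Φ x y + y * pdy (pdy Φ) x y))
        + k * (L x y * pdx M x y + M x y * pdy M x y) = 0)
      ∧
      -- (iii)
      (R * L x y *
        (x * y * (pdx (pdx (pdx Φ)) x y * (L x y) ^ 2
            + 2 * pdy (pdx (pdx Φ)) x y * (L x y) * (M x y)
            + pdy (pdy (pdx Φ)) x y * (M x y) ^ 2)
          + (x * y * L x y * pdx L x y + x * y * M x y * pdy L x y
              + 2 * x * L x y * M x y + 3 * y * (L x y) ^ 2) * pdx (pdx Φ) x y
          + (x * y * L x y * pdx M x y
              + M x y * (x * y * pdy M x y + 2 * x * M x y + 3 * y * L x y))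
            * pdy (pdx Φ) x y
          + (2 * y * L x y * pdx L x y + 2 * y * M x y * pdy L x y
              + x * L x y * pdx M x y + M x y * (x * pdy M x y + 3 * L x y))
            * pdx Φ x y)
        + x * (K x y) ^ 2 * pdx L x y - K x y * N x y * pdy L x y
        - (x * K x y * M x y + L x y * N x y) * pdy K x y
        - 3 * L x y * (K x y) ^ 2 - ω ^ 2 * L x y = 0)
      ∧
      -- (iv)
      (x * (M x y * pdy K x y - K x y * pdx L x y + L x y * pdx K x y)
        + N x y * pdy L x y + 2 * K x y * L x y = 0) :=
  stmt8_general R k n ω c₁ c₂ hn hω Φ L M K N hΦ hL hM hK hN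
end

section
/- Let R > 0, k > 0, n > 0 with n ≠ 2, ω > 0, c₁ ≠ 0 and c₂ > 0 be real constants, set m = 2n/(n − 2), and let Φ(x, y) = (n/2) ln y − ln x be the ideal-gas Planck potential. On a domain of points (x, y) with x > 0, y > 0 and c₂(x/y)^m − ω² > 0, the functions L(x, y) = c₁(x/y)^m, M(x, y) = (y/x)L(x, y), K(x, y) = √(c₂(x/y)^m − ω²), N(x, y) = −(2y/n)K(x, y) satisfy the four equations of the quotient system E_q: (i) xK M_x − N M_y + L N_x + M(N_y − K) = 0; (ii) Rxy(xK(Φ_x + yΦ_xy) − N(2Φ_y + yΦ_yy)) + k(L M_x + M M_y) = 0; (iii) RL·B + xK² L_x − KN L_y − (xKM + LN) K_y − 3LK² − ω²L = 0, where B = xy(Φ_xxx L² + 2Φ_xxy LM + Φ_xyy M²) + (xyL L_x + xyM L_y + 2xLM + 3yL²)Φ_xx + (xyL M_x + M(xy M_y + 2xM + 3yL))Φ_xy + (2yL L_x + 2yM L_y + xL M_x + M(x M_y + 3L))Φ_x; (iv) x(M K_y − K L_x + L K_x) + N L_y + 2KL = 0. -/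
open Real

theorem pdx_eq_of_hasDerivAt {f : ℝ → ℝ → ℝ} {f' x y : ℝ}
    (h : HasDerivAt (fun x' => f x' y) f' x) :
    pdx f x y = f' :=
  h.deriv

theorem pdy_eq_of_hasDerivAt {f : ℝ → ℝ → ℝ} {f' x y : ℝ}
    (h : HasDerivAt (fun y' => f x y') f' y) :
    pdy f x y = f' :=
  h.deriv

theorem pdx_fun_fst (g : ℝ → ℝ) : pdx (fun x (_ : ℝ) => g x) = fun x _ => deriv g x := rfl

theorem pdy_fun_fst (g : ℝ → ℝ) : pdy (fun x (_ : ℝ) => g x) = fun _ _ => 0 := by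
  ext
  simp [pdy]

theorem pdy_fun_snd (g : ℝ → ℝ) : pdy (fun (_ : ℝ) y => g y) = fun _ y => deriv g y := rfl

section PowerOfRatio

variable {x y m : ℝ}

theorem hasDerivAt_div_rpow_left (hx : x ≠ 0) (hy : y ≠ 0) :
    HasDerivAt (fun x' => (x' / y) ^ m) (m * (x / y) ^ m / x) x := by
  have hxy : x / y ≠ 0 := div_ne_zero hx hy
  convert (hasDerivAt_id' x |>.div_const y).rpow_const (p := m) (Or.inl hxy) using 1
  rw [rpow_sub_one hxy]
  field_simp

theorem hasDerivAt_div_rpow_right (hx : x ≠ 0) (hy : y ≠ 0) :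
    HasDerivAt (fun y' => (x / y') ^ m) (-(m * (x / y) ^ m / y)) y := by
  have hxy : x / y ≠ 0 := div_ne_zero hx hy
  convert (hasDerivAt_inv hy |>.const_mul x).rpow_const (p := m) (Or.inl hxy) using 1
  · simp only [div_eq_mul_inv]
  · rw [← div_eq_mul_inv, rpow_sub_one hxy]
    field_simp

end PowerOfRatio

section PlanckPotential

variable {n : ℝ} {Φ : ℝ → ℝ → ℝ}

theorem pdx_eq_of_eq_log_sub_log (hΦ : ∀ x y, Φ x y = n / 2 * log y - log x) :
    pdx Φ = fun x _ => -x⁻¹ := by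
  ext x y
  simp only [pdx, hΦ, deriv_const_sub, deriv_log]

theorem pdy_eq_of_eq_log_sub_log (hΦ : ∀ x y, Φ x y = n / 2 * log y - log x) :
    pdy Φ = fun _ y => n / 2 * y⁻¹ := by
  ext x y
  simp only [pdy, hΦ, deriv_sub_const, deriv_const_mul_field', deriv_log]

theorem pdx_pdx_eq_of_eq_log_sub_log (hΦ : ∀ x y, Φ x y = n / 2 * log y - log x) :
    pdx (pdx Φ) = fun x _ => (x ^ 2)⁻¹ := by
  rw [pdx_eq_of_eq_log_sub_log hΦ, pdx_fun_fst]
  simp only [deriv.fun_neg', deriv_inv', neg_neg]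

theorem pdx_pdx_pdx_eq_of_eq_log_sub_log (hΦ : ∀ x y, Φ x y = n / 2 * log y - log x)
    {x : ℝ} (hx : x ≠ 0) (y : ℝ) : pdx (pdx (pdx Φ)) x y = -2 / x ^ 3 := by
  rw [pdx_pdx_eq_of_eq_log_sub_log hΦ, pdx_fun_fst]
  beta_reduce
  rw [((hasDerivAt_pow 2 x).fun_inv (pow_ne_zero 2 hx)).deriv]
  field_simp
  ring

end PlanckPotential

section ConstantTypeSolution

variable {n m c ω x y : ℝ} {L M K N : ℝ → ℝ → ℝ}

theorem hasDerivAt_left_of_eq_mul_div_rpow (hL : ∀ x y, L x y = c * (x / y) ^ m)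
    (hx : x ≠ 0) (hy : y ≠ 0) : HasDerivAt (fun x' => L x' y) (m * L x y / x) x := by
  simp only [hL]
  exact (hasDerivAt_div_rpow_left hx hy).const_mul c |>.congr_deriv (by ring)

theorem hasDerivAt_right_of_eq_mul_div_rpow (hL : ∀ x y, L x y = c * (x / y) ^ m)
    (hx : x ≠ 0) (hy : y ≠ 0) : HasDerivAt (fun y' => L x y') (-(m * L x y / y)) y := by
  simp only [hL]
  exact (hasDerivAt_div_rpow_right hx hy).const_mul c |>.congr_deriv (by ring)

theorem hasDerivAt_left_of_eq_sqrt (hK : ∀ x y, K x y = √(c * (x / y) ^ m - ω ^ 2))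
    (hx : x ≠ 0) (hy : y ≠ 0) (hq : 0 < c * (x / y) ^ m - ω ^ 2) :
    HasDerivAt (fun x' => K x' y) (m * (K x y ^ 2 + ω ^ 2) / (2 * x * K x y)) x := by
  simp only [hK]
  convert ((hasDerivAt_div_rpow_left hx hy).const_mul c |>.sub_const (ω ^ 2)).sqrt hq.ne'
    using 1
  rw [sq_sqrt hq.le]
  field_simp
  ring

theorem hasDerivAt_right_of_eq_sqrt (hK : ∀ x y, K x y = √(c * (x / y) ^ m - ω ^ 2))
    (hx : x ≠ 0) (hy : y ≠ 0) (hq : 0 < c * (x / y) ^ m - ω ^ 2) :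
    HasDerivAt (fun y' => K x y') (-(m * (K x y ^ 2 + ω ^ 2) / (2 * y * K x y))) y := by
  simp only [hK]
  convert ((hasDerivAt_div_rpow_right hx hy).const_mul c |>.sub_const (ω ^ 2)).sqrt hq.ne'
    using 1
  rw [sq_sqrt hq.le]
  field_simp
  ring

theorem pdx_eq_of_eq_div_mul (hM : ∀ x y, M x y = y / x * L x y) {L' : ℝ}
    (hL : HasDerivAt (fun x' => L x' y) L' x) (hx : x ≠ 0) :
    pdx M x y = -(y / x ^ 2 * L x y) + y / x * L' := by
  simp only [pdx, hM]
  rw [((hasDerivAt_const x y).fun_div (hasDerivAt_id' x) hx |>.fun_mul hL).deriv]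
  field_simp
  ring

theorem pdy_eq_of_eq_div_mul (hM : ∀ x y, M x y = y / x * L x y) {L' : ℝ}
    (hL : HasDerivAt (fun y' => L x y') L' y) :
    pdy M x y = L x y / x + y / x * L' := by
  simp only [pdy, hM]
  rw [(hasDerivAt_id' y |>.div_const x |>.fun_mul hL).deriv]
  ring

theorem pdx_eq_of_eq_mul (hN : ∀ x y, N x y = -(2 * y / n) * K x y) :
    pdx N x y = -(2 * y / n) * pdx K x y := by
  simp only [pdx, hN, deriv_const_mul_field']

theorem pdy_eq_of_eq_mul (hN : ∀ x y, N x y = -(2 * y / n) * K x y) {K' : ℝ}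
    (hK : HasDerivAt (fun y' => K x y') K' y) :
    pdy N x y = -(2 / n) * K x y - 2 * y / n * K' := by
  simp only [pdy, hN]
  rw [(hasDerivAt_id' y |>.const_mul 2 |>.div_const n |>.fun_neg |>.fun_mul hK).deriv]
  ring

end ConstantTypeSolution

theorem stmt9_general (R k n ω c₁ c₂ m : ℝ) (hn : 0 < n)
    (hn2 : n ≠ 2)
    (hm : m = 2 * n / (n - 2))
    (Φ L M K N : ℝ → ℝ → ℝ)
    (hΦ : ∀ x y : ℝ, Φ x y = n / 2 * Real.log y - Real.log x)
    (hL : ∀ x y : ℝ, L x y = c₁ * (x / y) ^ m)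
    (hM : ∀ x y : ℝ, M x y = (y / x) * L x y)
    (hK : ∀ x y : ℝ, K x y = Real.sqrt (c₂ * (x / y) ^ m - ω ^ 2))
    (hN : ∀ x y : ℝ, N x y = -(2 * y / n) * K x y) :
    ∀ x y : ℝ, 0 < x → 0 < y → 0 < c₂ * (x / y) ^ m - ω ^ 2 →
      -- (i)
      (x * K x y * pdx M x y - N x y * pdy M x y + L x y * pdx N x y
        + M x y * (pdy N x y - K x y) = 0)
      ∧
      -- (ii)
      (R * x * y * (x * K x y * (pdx Φ x y + y * pdy (pdx Φ) x y)
          - N x y * (2 * pdy Φ x y + y * pdy (pdy Φ) x y))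
        + k * (L x y * pdx M x y + M x y * pdy M x y) = 0)
      ∧
      -- (iii)
      (R * L x y *
        (x * y * (pdx (pdx (pdx Φ)) x y * (L x y) ^ 2
            + 2 * pdy (pdx (pdx Φ)) x y * (L x y) * (M x y)
            + pdy (pdy (pdx Φ)) x y * (M x y) ^ 2)
          + (x * y * L x y * pdx L x y + x * y * M x y * pdy L x y
              + 2 * x * L x y * M x y + 3 * y * (L x y) ^ 2) * pdx (pdx Φ) x y
          + (x * y * L x y * pdx M x y
              + M x y * (x * y * pdy M x y + 2 * x * M x y + 3 * y * L x y))
            * pdy (pdx Φ) x y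
          + (2 * y * L x y * pdx L x y + 2 * y * M x y * pdy L x y
              + x * L x y * pdx M x y + M x y * (x * pdy M x y + 3 * L x y))
            * pdx Φ x y)
        + x * (K x y) ^ 2 * pdx L x y - K x y * N x y * pdy L x y
        - (x * K x y * M x y + L x y * N x y) * pdy K x y
        - 3 * L x y * (K x y) ^ 2 - ω ^ 2 * L x y = 0)
      ∧
      -- (iv)
      (x * (M x y * pdy K x y - K x y * pdx L x y + L x y * pdx K x y)
        + N x y * pdy L x y + 2 * K x y * L x y = 0) := by
  intro x y hx hy hq
  have hn0 := hn.ne'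
  have hn2' := sub_ne_zero.mpr hn2
  have hK0 : K x y ≠ 0 := (hK x y ▸ sqrt_pos.mpr hq).ne'
  have hLx := hasDerivAt_left_of_eq_mul_div_rpow hL hx.ne' hy.ne'
  have hLy := hasDerivAt_right_of_eq_mul_div_rpow hL hx.ne' hy.ne'
  have hKx := hasDerivAt_left_of_eq_sqrt hK hx.ne' hy.ne' hq
  have hKy := hasDerivAt_right_of_eq_sqrt hK hx.ne' hy.ne' hq
  rw [pdx_eq_of_eq_div_mul hM hLx hx.ne', pdy_eq_of_eq_div_mul hM hLy, pdx_eq_of_eq_mul hN,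
    pdy_eq_of_eq_mul hN hKy, pdx_eq_of_hasDerivAt hLx, pdy_eq_of_hasDerivAt hLy,
    pdx_eq_of_hasDerivAt hKx, pdy_eq_of_hasDerivAt hKy, hM, hN,
    pdx_pdx_pdx_eq_of_eq_log_sub_log hΦ hx.ne', pdx_pdx_eq_of_eq_log_sub_log hΦ,
    pdx_eq_of_eq_log_sub_log hΦ, pdy_eq_of_eq_log_sub_log hΦ]
  simp only [pdy_fun_fst, pdy_fun_snd, deriv_const_mul_field', deriv_inv]
  subst hm
  refine ⟨?_, ?_, ?_, ?_⟩ <;> field_simp <;> ring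

/-- The constant-type solution L = c₁(x/y)^m, M = (y/x)L,
K = √(c₂(x/y)^m − ω²), N = −(2y/n)K (with m = 2n/(n−2)) of the quotient
system E_q of the Euler system on the curve h(a) = λa² for the ideal-gas
Planck potential Φ = (n/2)ln y − ln x, on a domain where x > 0, y > 0 and
c₂(x/y)^m − ω² > 0. -/
theorem stmt9 (R k n ω c₁ c₂ m : ℝ) (hR : 0 < R) (hk : 0 < k) (hn : 0 < n)
    (hn2 : n ≠ 2) (hω : 0 < ω) (hc₁ : c₁ ≠ 0) (hc₂ : 0 < c₂)
    (hm : m = 2 * n / (n - 2))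
    (Φ L M K N : ℝ → ℝ → ℝ)
    (hΦ : ∀ x y : ℝ, Φ x y = n / 2 * Real.log y - Real.log x)
    (hL : ∀ x y : ℝ, L x y = c₁ * (x / y) ^ m)
    (hM : ∀ x y : ℝ, M x y = (y / x) * L x y)
    (hK : ∀ x y : ℝ, K x y = Real.sqrt (c₂ * (x / y) ^ m - ω ^ 2))
    (hN : ∀ x y : ℝ, N x y = -(2 * y / n) * K x y) :
    ∀ x y : ℝ, 0 < x → 0 < y → 0 < c₂ * (x / y) ^ m - ω ^ 2 →
      -- (i)
      (x * K x y * pdx M x y - N x y * pdy M x y + L x y * pdx N x y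
        + M x y * (pdy N x y - K x y) = 0)
      ∧
      -- (ii)
      (R * x * y * (x * K x y * (pdx Φ x y + y * pdy (pdx Φ) x y)
          - N x y * (2 * pdy Φ x y + y * pdy (pdy Φ) x y))
        + k * (L x y * pdx M x y + M x y * pdy M x y) = 0)
      ∧
      -- (iii)
      (R * L x y *
        (x * y * (pdx (pdx (pdx Φ)) x y * (L x y) ^ 2
            + 2 * pdy (pdx (pdx Φ)) x y * (L x y) * (M x y)
            + pdy (pdy (pdx Φ)) x y * (M x y) ^ 2)
          + (x * y * L x y * pdx L x y + x * y * M x y * pdy L x y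
              + 2 * x * L x y * M x y + 3 * y * (L x y) ^ 2) * pdx (pdx Φ) x y
          + (x * y * L x y * pdx M x y
              + M x y * (x * y * pdy M x y + 2 * x * M x y + 3 * y * L x y))
            * pdy (pdx Φ) x y
          + (2 * y * L x y * pdx L x y + 2 * y * M x y * pdy L x y
              + x * L x y * pdx M x y + M x y * (x * pdy M x y + 3 * L x y))
            * pdx Φ x y)
        + x * (K x y) ^ 2 * pdx L x y - K x y * N x y * pdy L x y
        - (x * K x y * M x y + L x y * N x y) * pdy K x y
        - 3 * L x y * (K x y) ^ 2 - ω ^ 2 * L x y = 0)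
      ∧
      -- (iv)
      (x * (M x y * pdy K x y - K x y * pdx L x y + L x y * pdx K x y)
        + N x y * pdy L x y + 2 * K x y * L x y = 0) :=
  stmt9_general R k n ω c₁ c₂ m hn hn2 hm Φ L M K N hΦ hL hM hK hN
end

section
/- Let R > 0, k > 0, n > 0, λ > 0, g > 0, set ω = √(2λg), and let c₁ ≠ 0, c₂ > 0, c₃, c₄, c₅ be real constants. Let I ⊂ ℝ be an open interval on which cos(c₃ − ωt) > 0. Define on I × ℝ (variables (t, a)): ρ(t, a) = ω/(√c₂ cos(c₃ − ωt)); let F₁ : I → ℝ be an antiderivative of t ↦ cos^{−2/n}(c₃ − ωt), set f(t) = −R c₁ c₂^{−(n+2)/(2n)} ω^{(n+2)/n} (F₁(t) + c₄)/cos(c₃ − ωt); let F₂ : I → ℝ be an antiderivative of t ↦ f(t)/cos(c₃ − ωt); define u(t, a) = a ω tan(c₃ − ωt) + f(t) and θ(t, a) = c₁ a ρ(t, a)^{1 + 2/n} − cos^{−2/n}(c₃ − ωt)(c₁ c₂^{−(n+2)/(2n)} ω^{(n+2)/n} F₂(t) + c₅). Then, with p = Rρθ, the triple (u, ρ, θ)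 satisfies on I × ℝ the Euler system: ρ(u_t + u u_a) = −p_a − 2ρgλa; ρ_t + (ρu)_a = 0; and R((n/2)ρ(θ_t + u θ_a) − θ(ρ_t + u ρ_a)) = k θ_aa. -/
/-!
With `κ(t) = ω tan(c₃ − ωt)` the ansatz reduces the Euler system to ordinary differential
equations in `t`: `κ` solves the Riccati equation `κ' = −ω² − κ²`, `ρ' = −κρ`,
`f' = −κf − Rc₁ρ^(1+2/n)`, and the part `ψ` of `θ` independent of `a` solves
`ψ' = −(2/n)κψ + c₁fρ^(1+2/n)`; the choice of `F₁`, `F₂` is exactly what makes the last two hold.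
Since `u` is affine in `a` and `ρ` does not depend on `a`, the momentum equation splits into the
Riccati equation (coefficient of `a`) and the equation for `f`, continuity is `ρ' = −κρ`, and
`θ_t + uθ_a = −(2/n)κθ` makes both sides of the entropy equation vanish.
-/

section
variable {c₃ ω t : ℝ}

theorem hasDerivAt_cos_sub_mul (h : Real.cos (c₃ - ω * t) ≠ 0) :
    HasDerivAt (fun s => Real.cos (c₃ - ω * s))
      (ω * Real.tan (c₃ - ω * t) * Real.cos (c₃ - ω * t)) t := by
  refine (((hasDerivAt_id' t).const_mul ω).const_sub c₃).cos.congr_deriv ?_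
  rw [Real.tan_eq_sin_div_cos]
  field_simp

theorem hasDerivAt_tan_sub_mul (h : Real.cos (c₃ - ω * t) ≠ 0) :
    HasDerivAt (fun s => ω * Real.tan (c₃ - ω * s))
      (-ω ^ 2 - (ω * Real.tan (c₃ - ω * t)) ^ 2) t := by
  refine (((Real.hasDerivAt_tan h).comp t
    (((hasDerivAt_id' t).const_mul ω).const_sub c₃)).const_mul ω).congr_deriv ?_
  rw [Real.tan_eq_sin_div_cos]
  field_simp
  linear_combination ω ^ 2 * Real.sin_sq_add_cos_sq (c₃ - ω * t)

theorem HasDerivAt.div_cos_sub_mul {F : ℝ → ℝ} {F' : ℝ} (hF : HasDerivAt F F' t)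
    (h : Real.cos (c₃ - ω * t) ≠ 0) :
    HasDerivAt (fun s => F s / Real.cos (c₃ - ω * s))
      (F' / Real.cos (c₃ - ω * t)
        - ω * Real.tan (c₃ - ω * t) * (F t / Real.cos (c₃ - ω * t))) t := by
  refine (hF.div (hasDerivAt_cos_sub_mul h) h).congr_deriv ?_
  field_simp

end

theorem div_sqrt_div_rpow_one_add_two_div {c₂ ω x n : ℝ} (hc₂ : 0 < c₂) (hω : 0 ≤ ω)
    (hx : 0 < x) (hn : n ≠ 0) :
    (ω / Real.sqrt c₂ / x) ^ (1 + 2 / n)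
      = c₂ ^ (-((n + 2) / (2 * n))) * ω ^ ((n + 2) / n) * x ^ (-(2 / n)) / x := by
  have hq : (n + 2) / n = 1 + 2 / n := by field_simp
  have hc₂q : c₂ ^ (-((n + 2) / (2 * n))) = (Real.sqrt c₂ ^ (1 + 2 / n))⁻¹ := by
    rw [Real.sqrt_eq_rpow, ← Real.rpow_mul hc₂.le, Real.rpow_neg hc₂.le, ← hq]
    ring_nf
  have hxq : x ^ (1 + 2 / n) = x * x ^ (2 / n) := by
    rw [Real.rpow_add hx, Real.rpow_one]
  rw [Real.div_rpow (by positivity) hx.le, Real.div_rpow hω (Real.sqrt_nonneg _), hc₂q, hq,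
    hxq, Real.rpow_neg hx.le]
  field_simp

theorem HasDerivAt.rpow_const_of_hasDerivAt_mul {φ : ℝ → ℝ} {κ x : ℝ}
    (hφ : HasDerivAt φ (κ * φ x) x) (hx : φ x ≠ 0) (r : ℝ) :
    HasDerivAt (fun y => φ y ^ r) (r * κ * φ x ^ r) x := by
  convert hφ.rpow_const (p := r) (Or.inl hx) using 1
  rw [Real.rpow_sub_one hx]
  field_simp

theorem euler_system_of_ansatz {R k n c₁ ω lam g : ℝ} (hn : n ≠ 0)
    (hω : ω ^ 2 = 2 * lam * g) {κ ρ₀ f ψ : ℝ → ℝ} {t : ℝ}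
    (hκ : HasDerivAt κ (-ω ^ 2 - κ t ^ 2) t)
    (hρ₀ : HasDerivAt ρ₀ (-κ t * ρ₀ t) t) (hρ₀t : ρ₀ t ≠ 0)
    (hf : HasDerivAt f (-κ t * f t - R * c₁ * ρ₀ t ^ (1 + 2 / n)) t)
    (hψ : HasDerivAt ψ (-(2 / n) * κ t * ψ t + c₁ * f t * ρ₀ t ^ (1 + 2 / n)) t)
    {u ρ θ p : ℝ → ℝ → ℝ}
    (hu : ∀ s a, u s a = a * κ s + f s) (hρ : ∀ s a, ρ s a = ρ₀ s)
    (hθ : ∀ s a, θ s a = c₁ * a * ρ s a ^ (1 + 2 / n) - ψ s)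
    (hp : ∀ s a, p s a = R * ρ s a * θ s a) (a : ℝ) :
    (ρ t a * (deriv (fun s => u s a) t + u t a * deriv (u t) a)
        = -(deriv (p t) a) - 2 * ρ t a * g * lam * a)
      ∧ (deriv (fun s => ρ s a) t + deriv (fun b => ρ t b * u t b) a = 0)
      ∧ (R * ((n / 2) * ρ t a * (deriv (fun s => θ s a) t + u t a * deriv (θ t) a)
            - θ t a * (deriv (fun s => ρ s a) t + u t a * deriv (ρ t) a))
          = k * deriv (deriv (θ t)) a) := by
  obtain rfl : u = fun s a => a * κ s + f s := funext₂ hu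
  obtain rfl : ρ = fun s _ => ρ₀ s := funext₂ hρ
  obtain rfl : θ = fun s a => c₁ * a * ρ₀ s ^ (1 + 2 / n) - ψ s := funext₂ hθ
  obtain rfl : p = fun s a => R * ρ₀ s * (c₁ * a * ρ₀ s ^ (1 + 2 / n) - ψ s) := funext₂ hp
  have hu_t : deriv (fun s => a * κ s + f s) t
      = a * (-ω ^ 2 - κ t ^ 2) + (-κ t * f t - R * c₁ * ρ₀ t ^ (1 + 2 / n)) :=
    ((hκ.const_mul a).add hf).deriv
  have hθ_t : deriv (fun s => c₁ * a * ρ₀ s ^ (1 + 2 / n) - ψ s) t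
      = c₁ * a * ((1 + 2 / n) * -κ t * ρ₀ t ^ (1 + 2 / n))
        - (-(2 / n) * κ t * ψ t + c₁ * f t * ρ₀ t ^ (1 + 2 / n)) :=
    (((hρ₀.rpow_const_of_hasDerivAt_mul hρ₀t (1 + 2 / n)).const_mul (c₁ * a)).sub hψ).deriv
  have hu_a : deriv (fun b => b * κ t + f t) a = κ t := by simp
  have hρu_a : deriv (fun b => ρ₀ t * (b * κ t + f t)) a = ρ₀ t * κ t := by simp
  have hp_a : deriv (fun b => R * ρ₀ t * (c₁ * b * ρ₀ t ^ (1 + 2 / n) - ψ t)) a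
      = R * ρ₀ t * (c₁ * ρ₀ t ^ (1 + 2 / n)) := by simp
  have hθ_a : deriv (fun b => c₁ * b * ρ₀ t ^ (1 + 2 / n) - ψ t)
      = fun _ => c₁ * ρ₀ t ^ (1 + 2 / n) := by
    funext b
    simp
  simp only [hu_t, hθ_t, hu_a, hρu_a, hp_a, hθ_a, hρ₀.deriv, deriv_const]
  refine ⟨by linear_combination (-(a * ρ₀ t)) * hω, by ring, ?_⟩
  field_simp
  ring

theorem stmt10_general (R k n lam g ω : ℝ) (hn : 0 < n)
    (hlam : 0 < lam) (hg : 0 < g) (hω : ω = Real.sqrt (2 * lam * g))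
    (c₁ c₂ c₃ c₄ c₅ : ℝ) (hc₂ : 0 < c₂)
    (t₁ t₂ : ℝ)
    (hcos : ∀ t ∈ Set.Ioo t₁ t₂, 0 < Real.cos (c₃ - ω * t))
    (F₁ : ℝ → ℝ)
    (hF₁ : ∀ t ∈ Set.Ioo t₁ t₂,
      HasDerivAt F₁ (Real.cos (c₃ - ω * t) ^ (-(2 / n))) t)
    (f : ℝ → ℝ)
    (hf : ∀ t : ℝ, f t = -R * c₁ * c₂ ^ (-((n + 2) / (2 * n))) * ω ^ ((n + 2) / n)
      * (F₁ t + c₄) / Real.cos (c₃ - ω * t))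
    (F₂ : ℝ → ℝ)
    (hF₂ : ∀ t ∈ Set.Ioo t₁ t₂, HasDerivAt F₂ (f t / Real.cos (c₃ - ω * t)) t)
    (u ρ θ p : ℝ → ℝ → ℝ)
    (hu : ∀ t a : ℝ, u t a = a * ω * Real.tan (c₃ - ω * t) + f t)
    (hρ : ∀ t a : ℝ, ρ t a = ω / (Real.sqrt c₂ * Real.cos (c₃ - ω * t)))
    (hθ : ∀ t a : ℝ, θ t a = c₁ * a * ρ t a ^ (1 + 2 / n)
      - Real.cos (c₃ - ω * t) ^ (-(2 / n))
        * (c₁ * c₂ ^ (-((n + 2) / (2 * n))) * ω ^ ((n + 2) / n) * F₂ t + c₅))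
    (hp : ∀ t a : ℝ, p t a = R * ρ t a * θ t a) :
    ∀ t ∈ Set.Ioo t₁ t₂, ∀ a : ℝ,
      (ρ t a * (deriv (fun s => u s a) t + u t a * deriv (u t) a)
        = -(deriv (p t) a) - 2 * ρ t a * g * lam * a)
      ∧ (deriv (fun s => ρ s a) t + deriv (fun b => ρ t b * u t b) a = 0)
      ∧ (R * ((n / 2) * ρ t a * (deriv (fun s => θ s a) t + u t a * deriv (θ t) a)
            - θ t a * (deriv (fun s => ρ s a) t + u t a * deriv (ρ t) a))
          = k * deriv (deriv (θ t)) a) := by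
  intro t ht a
  have hω0 : 0 < ω := hω ▸ Real.sqrt_pos.2 (by positivity)
  have hω2 : ω ^ 2 = 2 * lam * g := hω ▸ Real.sq_sqrt (by positivity)
  have hc := hcos t ht
  have hρq := div_sqrt_div_rpow_one_add_two_div hc₂ hω0.le hc hn.ne'
  have hρ' : HasDerivAt (fun s => ω / Real.sqrt c₂ / Real.cos (c₃ - ω * s))
      (-(ω * Real.tan (c₃ - ω * t)) * (ω / Real.sqrt c₂ / Real.cos (c₃ - ω * t))) t :=
    ((hasDerivAt_const t _).div_cos_sub_mul hc.ne').congr_deriv (by ring)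
  have hf' : HasDerivAt f (-(ω * Real.tan (c₃ - ω * t)) * f t
      - R * c₁ * (ω / Real.sqrt c₂ / Real.cos (c₃ - ω * t)) ^ (1 + 2 / n)) t := by
    rw [show f = _ from funext hf, hρq]
    exact ((((hF₁ t ht).add_const c₄).const_mul _).div_cos_sub_mul hc.ne').congr_deriv
      (by ring)
  have hψ' : HasDerivAt (fun s => Real.cos (c₃ - ω * s) ^ (-(2 / n))
        * (c₁ * c₂ ^ (-((n + 2) / (2 * n))) * ω ^ ((n + 2) / n) * F₂ s + c₅))
      (-(2 / n) * (ω * Real.tan (c₃ - ω * t)) * (Real.cos (c₃ - ω * t) ^ (-(2 / n))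
        * (c₁ * c₂ ^ (-((n + 2) / (2 * n))) * ω ^ ((n + 2) / n) * F₂ t + c₅))
        + c₁ * f t * (ω / Real.sqrt c₂ / Real.cos (c₃ - ω * t)) ^ (1 + 2 / n)) t := by
    rw [hρq]
    exact (((hasDerivAt_cos_sub_mul hc.ne').rpow_const_of_hasDerivAt_mul hc.ne' _).mul
      (((hF₂ t ht).const_mul _).add_const c₅)).congr_deriv (by ring)
  exact euler_system_of_ansatz hn.ne' hω2 (hasDerivAt_tan_sub_mul hc.ne') hρ' (by positivity)
    hf' hψ' (fun s a => by rw [hu]; ring) (fun s a => by rw [hρ, div_mul_eq_div_div]) hθ hp a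

/-- The exact solution of the Euler system of an ideal gas on the curve
h(a) = λa² obtained from the quotient solution L = 0, M = c₁x^(1+2/n),
K = √(c₂x²−ω²), N = −(2y/n)K: with ω = √(2λg), on an open interval I where
cos(c₃ − ωt) > 0, the functions
ρ = ω/(√c₂ cos(c₃−ωt)),
u = aω tan(c₃−ωt) + f(t),
θ = c₁aρ^(1+2/n) − cos^(−2/n)(c₃−ωt)(c₁c₂^(−(n+2)/(2n))ω^((n+2)/n) F₂(t) + c₅),
where f(t) = −Rc₁c₂^(−(n+2)/(2n))ω^((n+2)/n)(F₁(t)+c₄)/cos(c₃−ωt),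
F₁′ = cos^(−2/n)(c₃−ωt) and F₂′ = f/cos(c₃−ωt),
satisfy (with p = Rρθ) the Euler system
ρ(u_t + uu_a) = −p_a − 2ρgλa,  ρ_t + (ρu)_a = 0,
R((n/2)ρ(θ_t + uθ_a) − θ(ρ_t + uρ_a)) = kθ_aa. -/
theorem stmt10 (R k n lam g ω : ℝ) (hR : 0 < R) (hk : 0 < k) (hn : 0 < n)
    (hlam : 0 < lam) (hg : 0 < g) (hω : ω = Real.sqrt (2 * lam * g))
    (c₁ c₂ c₃ c₄ c₅ : ℝ) (hc₁ : c₁ ≠ 0) (hc₂ : 0 < c₂)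
    (t₁ t₂ : ℝ)
    (hcos : ∀ t ∈ Set.Ioo t₁ t₂, 0 < Real.cos (c₃ - ω * t))
    (F₁ : ℝ → ℝ)
    (hF₁ : ∀ t ∈ Set.Ioo t₁ t₂,
      HasDerivAt F₁ (Real.cos (c₃ - ω * t) ^ (-(2 / n))) t)
    (f : ℝ → ℝ)
    (hf : ∀ t : ℝ, f t = -R * c₁ * c₂ ^ (-((n + 2) / (2 * n))) * ω ^ ((n + 2) / n)
      * (F₁ t + c₄) / Real.cos (c₃ - ω * t))
    (F₂ : ℝ → ℝ)
    (hF₂ : ∀ t ∈ Set.Ioo t₁ t₂, HasDerivAt F₂ (f t / Real.cos (c₃ - ω * t)) t)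
    (u ρ θ p : ℝ → ℝ → ℝ)
    (hu : ∀ t a : ℝ, u t a = a * ω * Real.tan (c₃ - ω * t) + f t)
    (hρ : ∀ t a : ℝ, ρ t a = ω / (Real.sqrt c₂ * Real.cos (c₃ - ω * t)))
    (hθ : ∀ t a : ℝ, θ t a = c₁ * a * ρ t a ^ (1 + 2 / n)
      - Real.cos (c₃ - ω * t) ^ (-(2 / n))
        * (c₁ * c₂ ^ (-((n + 2) / (2 * n))) * ω ^ ((n + 2) / n) * F₂ t + c₅))
    (hp : ∀ t a : ℝ, p t a = R * ρ t a * θ t a) :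
    ∀ t ∈ Set.Ioo t₁ t₂, ∀ a : ℝ,
      (ρ t a * (deriv (fun s => u s a) t + u t a * deriv (u t) a)
        = -(deriv (p t) a) - 2 * ρ t a * g * lam * a)
      ∧ (deriv (fun s => ρ s a) t + deriv (fun b => ρ t b * u t b) a = 0)
      ∧ (R * ((n / 2) * ρ t a * (deriv (fun s => θ s a) t + u t a * deriv (θ t) a)
            - θ t a * (deriv (fun s => ρ s a) t + u t a * deriv (ρ t) a))
          = k * deriv (deriv (θ t)) a) :=
  stmt10_general R k n lam g ω hn hlam hg hω c₁ c₂ c₃ c₄ c₅ hc₂ t₁ t₂ hcos F₁ hF₁ f hf F₂ hF₂ u ρ θ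
    p hu hρ hθ hp
end

section
/- Let R > 0, k > 0, n > 0 with n ≠ 2, λ > 0, g > 0, set ω = √(2λg), and let c₁ ≠ 0, c₂ > 0, c₃, c₄, c₅ be real constants. Let I ⊂ ℝ be an open interval on which cos(c₃ − ωt) > 0. Let F₁ : I → ℝ be an antiderivative of t ↦ cos^{−2/n}(c₃ − ωt) and set f(t) = −R c₁ c₂^{−(n+2)/(2n)} ω^{(n+2)/n} (F₁(t) + c₄)/cos(c₃ − ωt); let F₃ : I → ℝ be an antiderivative of t ↦ 2f(t)/cos(c₃ − ωt). Define on I × ℝ: u(t, a) = a ω tan(c₃ − ωt) + 2f(t); ρ(t, a) = c₁ω²a/(c₂ cos²(c₃ − ωt)) − (c₁ω²/(c₂ cos(c₃ − ωt)))(F₃(t) + c₅); θ(t, a) = ρ(t, a) · (c₂ cos²(c₃ − ωt)/ω²)^{(n−2)/(2n)}. Then, with p = Rρθ, the triple (u, ρ, θ) satisfies on I × ℝ the Euler system: ρ(u_t + u u_a) = −p_a − 2ρgλa; ρ_t + (ρu)_a = 0; and R((n/2)ρ(θ_t + u θ_a) − θ(ρ_t + u ρ_a)) = k θ_aa. -/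
/-!
All three fields are affine in `a` with time-dependent coefficients: `u = α a + β`,
`ρ = A a + B`, `θ = G ρ`. For such fields `θ_aa = 0` and the Euler system reduces to ordinary
differential equations for the coefficients,
`A' = -2Aα`, `B' = -(Aβ + Bα)`, `α' = -(α² + 2gλ)`, `β' = -αβ - 2RGA`, `G' = ((n-2)/n) G α`.
With `α = ω tan(c₃ - ωt)` these are, in turn, the derivative of `cos⁻²`, the defining relation
`F₃' = 2f/cos`, the Riccati equation `tan' = 1 + tan²` (using `ω² = 2gλ`), the relation
`F₁' = cos^(-2/n)` combined with an identity between real powers, and the chain rule for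
`(c₂cos²/ω²)^((n-2)/(2n))`.
-/

open Real

namespace AffineFlow

variable {α β A B G : ℝ → ℝ} {u ρ θ p : ℝ → ℝ → ℝ} {t : ℝ}

theorem hasDerivAt_time {f : ℝ → ℝ → ℝ} {c d : ℝ → ℝ} {c' d' : ℝ}
    (hf : ∀ s b, f s b = c s * b + d s) (hc : HasDerivAt c c' t) (hd : HasDerivAt d d' t)
    (a : ℝ) : HasDerivAt (fun s => f s a) (c' * a + d') t := by
  have hfa : (fun s => f s a) = fun s => c s * a + d s := funext fun s => hf s a
  rw [hfa]
  exact (hc.mul_const a).add hd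

theorem hasDerivAt_space {f : ℝ → ℝ → ℝ} {c d : ℝ → ℝ}
    (hf : ∀ s b, f s b = c s * b + d s) (t a : ℝ) : HasDerivAt (f t) (c t) a := by
  have hft : f t = fun b => c t * b + d t := funext (hf t)
  rw [hft]
  exact (((hasDerivAt_id' a).const_mul (c t)).add_const (d t)).congr_deriv (mul_one _)

theorem eq_affine_of_eq_mul (hθ : ∀ s b, θ s b = ρ s b * G s) (hρ : ∀ s b, ρ s b = A s * b + B s) :
    ∀ s b, θ s b = A s * G s * b + B s * G s := fun s b => by rw [hθ, hρ]; ring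

theorem transport_eq (hu : ∀ s b, u s b = α s * b + β s) (hρ : ∀ s b, ρ s b = A s * b + B s)
    (hA : HasDerivAt A (-2 * A t * α t) t) (hB : HasDerivAt B (-(A t * β t + B t * α t)) t)
    (a : ℝ) :
    deriv (fun s => ρ s a) t + u t a * deriv (ρ t) a = -(α t * ρ t a) := by
  rw [(hasDerivAt_time hρ hA hB a).deriv, (hasDerivAt_space hρ t a).deriv, hu, hρ]
  ring

theorem continuity_eq (hu : ∀ s b, u s b = α s * b + β s) (hρ : ∀ s b, ρ s b = A s * b + B s)
    (hA : HasDerivAt A (-2 * A t * α t) t) (hB : HasDerivAt B (-(A t * β t + B t * α t)) t)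
    (a : ℝ) :
    deriv (fun s => ρ s a) t + deriv (fun b => ρ t b * u t b) a = 0 := by
  have hρu : HasDerivAt (fun b => ρ t b * u t b) (A t * u t a + ρ t a * α t) a :=
    (hasDerivAt_space hρ t a).mul (hasDerivAt_space hu t a)
  have htr := transport_eq hu hρ hA hB a
  rw [(hasDerivAt_space hρ t a).deriv] at htr
  rw [hρu.deriv]
  linear_combination htr

theorem momentum_eq (R g lam : ℝ) (hu : ∀ s b, u s b = α s * b + β s)
    (hρ : ∀ s b, ρ s b = A s * b + B s) (hθ : ∀ s b, θ s b = ρ s b * G s)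
    (hp : ∀ s b, p s b = R * ρ s b * θ s b)
    (hα : HasDerivAt α (-(α t ^ 2 + 2 * g * lam)) t)
    (hβ : HasDerivAt β (-(α t * β t) - 2 * R * G t * A t) t) (a : ℝ) :
    ρ t a * (deriv (fun s => u s a) t + u t a * deriv (u t) a)
      = -(deriv (p t) a) - 2 * ρ t a * g * lam * a := by
  have hpt : p t = fun b => R * ρ t b * θ t b := funext (hp t)
  have hpa : HasDerivAt (fun b => R * ρ t b * θ t b) _ a :=
    ((hasDerivAt_space hρ t a).const_mul R).mul
    (hasDerivAt_space (eq_affine_of_eq_mul hθ hρ) t a)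
  rw [(hasDerivAt_time hu hα hβ a).deriv, (hasDerivAt_space hu t a).deriv, hpt, hpa.deriv,
    hu, hθ, hρ]
  ring

theorem entropy_eq (n R k : ℝ) (hn : n ≠ 0) (hu : ∀ s b, u s b = α s * b + β s)
    (hρ : ∀ s b, ρ s b = A s * b + B s) (hθ : ∀ s b, θ s b = ρ s b * G s)
    (hA : HasDerivAt A (-2 * A t * α t) t) (hB : HasDerivAt B (-(A t * β t + B t * α t)) t)
    (hG : HasDerivAt G ((n - 2) / n * G t * α t) t) (a : ℝ) :
    R * ((n / 2) * ρ t a * (deriv (fun s => θ s a) t + u t a * deriv (θ t) a)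
        - θ t a * (deriv (fun s => ρ s a) t + u t a * deriv (ρ t) a))
      = k * deriv (deriv (θ t)) a := by
  have hθt : HasDerivAt (fun s => θ s a)
      ((-2 * A t * α t * a + -(A t * β t + B t * α t)) * G t
        + ρ t a * ((n - 2) / n * G t * α t)) t := by
    simp only [hθ]
    exact (hasDerivAt_time hρ hA hB a).mul hG
  have hθa : deriv (θ t) = fun _ => A t * G t :=
    funext fun b => (hasDerivAt_space (eq_affine_of_eq_mul hθ hρ) t b).deriv
  rw [transport_eq hu hρ hA hB a, hθt.deriv, hθa, deriv_const, hθ, hu, hρ]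
  field_simp
  ring

end AffineFlow

section Phase

variable {c₃ ω t : ℝ}

theorem hasDerivAt_cos_phase (c₃ ω t : ℝ) :
    HasDerivAt (fun s => cos (c₃ - ω * s)) (ω * sin (c₃ - ω * t)) t := by
  have h := (((hasDerivAt_id' t).const_mul ω).const_sub c₃).cos
  exact h.congr_deriv (by ring)

theorem hasDerivAt_mul_tan_phase (hC : cos (c₃ - ω * t) ≠ 0) :
    HasDerivAt (fun s => ω * tan (c₃ - ω * s)) (-((ω * tan (c₃ - ω * t)) ^ 2 + ω ^ 2)) t := by
  have h := ((hasDerivAt_tan hC).comp t (((hasDerivAt_id' t).const_mul ω).const_sub c₃)).const_mul ω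
  refine h.congr_deriv ?_
  rw [tan_eq_sin_div_cos]
  field_simp
  linear_combination ω ^ 2 * sin_sq_add_cos_sq (c₃ - ω * t)

theorem hasDerivAt_div_cos_sq_phase (κ : ℝ) (hC : cos (c₃ - ω * t) ≠ 0) :
    HasDerivAt (fun s => κ / cos (c₃ - ω * s) ^ 2)
      (-2 * (κ / cos (c₃ - ω * t) ^ 2) * (ω * tan (c₃ - ω * t))) t := by
  have h := (hasDerivAt_const t κ).div ((hasDerivAt_cos_phase c₃ ω t).fun_pow 2) (pow_ne_zero 2 hC)
  refine h.congr_deriv ?_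
  rw [tan_eq_sin_div_cos]
  field_simp
  ring

theorem hasDerivAt_div_cos_phase {F : ℝ → ℝ} {F' : ℝ} (hF : HasDerivAt F F' t)
    (hC : cos (c₃ - ω * t) ≠ 0) :
    HasDerivAt (fun s => F s / cos (c₃ - ω * s))
      (F' / cos (c₃ - ω * t) - ω * tan (c₃ - ω * t) * (F t / cos (c₃ - ω * t))) t := by
  refine (hF.div (hasDerivAt_cos_phase c₃ ω t) hC).congr_deriv ?_
  rw [tan_eq_sin_div_cos]
  field_simp

theorem hasDerivAt_rpow_cos_sq_phase {c d : ℝ} (m : ℝ) (hc : c ≠ 0) (hd : d ≠ 0)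
    (hC : cos (c₃ - ω * t) ≠ 0) :
    HasDerivAt (fun s => (c * cos (c₃ - ω * s) ^ 2 / d) ^ m)
      (2 * m * (c * cos (c₃ - ω * t) ^ 2 / d) ^ m * (ω * tan (c₃ - ω * t))) t := by
  have hx : c * cos (c₃ - ω * t) ^ 2 / d ≠ 0 := by positivity
  have h := ((((hasDerivAt_cos_phase c₃ ω t).fun_pow 2).const_mul c).div_const d).rpow_const
    (p := m) (Or.inl hx)
  refine h.congr_deriv ?_
  rw [rpow_sub_one hx, tan_eq_sin_div_cos]
  field_simp
  ring

end Phase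

theorem rpow_div_sq_mul_inv_eq {n c₁ c₂ x ω : ℝ} (hn : n ≠ 0) (hc₂ : 0 < c₂) (hx : 0 < x)
    (hω : 0 < ω) :
    (c₂ * x ^ 2 / ω ^ 2) ^ ((n - 2) / (2 * n)) * (c₁ * ω ^ 2 / c₂ / x ^ 2)
      = c₁ * c₂ ^ (-((n + 2) / (2 * n))) * ω ^ ((n + 2) / n) * x ^ (-(2 / n)) / x := by
  have hy : 0 < c₂ * x ^ 2 / ω ^ 2 := by positivity
  have hsq : ∀ y : ℝ, 0 < y → (y ^ 2) ^ (-((n + 2) / (2 * n))) = y ^ (-(2 / n) - 1) := by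
    intro y hy
    rw [← rpow_natCast, ← rpow_mul hy.le]
    congr 1
    field_simp
    push_cast
    ring
  calc (c₂ * x ^ 2 / ω ^ 2) ^ ((n - 2) / (2 * n)) * (c₁ * ω ^ 2 / c₂ / x ^ 2)
      = c₁ * (c₂ * x ^ 2 / ω ^ 2) ^ ((n - 2) / (2 * n) - 1) := by
        rw [rpow_sub_one hy.ne']
        field_simp
    _ = c₁ * (c₂ ^ (-((n + 2) / (2 * n))) * x ^ (-(2 / n) - 1) / ω ^ (-(2 / n) - 1)) := by
        rw [div_rpow (by positivity) (by positivity), mul_rpow hc₂.le (by positivity),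
          show (n - 2) / (2 * n) - 1 = -((n + 2) / (2 * n)) by field_simp; ring, hsq x hx,
          hsq ω hω]
    _ = c₁ * c₂ ^ (-((n + 2) / (2 * n))) * ω ^ ((n + 2) / n) * x ^ (-(2 / n)) / x := by
        rw [rpow_sub_one hx.ne', rpow_sub_one hω.ne', show -(2 / n) = -((n + 2) / n) + 1 by
          field_simp; ring, rpow_add_one hω.ne', rpow_neg hω.le]
        field_simp

theorem hasDerivAt_two_mul_velocity_offset {R n c₁ c₂ c₃ c₄ ω t : ℝ} {F₁ f : ℝ → ℝ}
    (hn : n ≠ 0) (hc₂ : 0 < c₂) (hω : 0 < ω) (hC : 0 < cos (c₃ - ω * t))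
    (hF₁ : HasDerivAt F₁ (cos (c₃ - ω * t) ^ (-(2 / n))) t)
    (hf : ∀ s, f s = -R * c₁ * c₂ ^ (-((n + 2) / (2 * n))) * ω ^ ((n + 2) / n)
      * (F₁ s + c₄) / cos (c₃ - ω * s)) :
    HasDerivAt (fun s => 2 * f s)
      (-(ω * tan (c₃ - ω * t) * (2 * f t)) - 2 * R
        * (c₂ * cos (c₃ - ω * t) ^ 2 / ω ^ 2) ^ ((n - 2) / (2 * n))
        * (c₁ * ω ^ 2 / c₂ / cos (c₃ - ω * t) ^ 2)) t := by
  rw [funext hf]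
  refine ((hasDerivAt_div_cos_phase ((hF₁.add_const c₄).const_mul _) hC.ne').const_mul
    2).congr_deriv ?_
  linear_combination (2 * R) * rpow_div_sq_mul_inv_eq (c₁ := c₁) hn hc₂ hC hω

open AffineFlow in
theorem stmt11_general (R k n lam g ω : ℝ) (hn : 0 < n)
    (hlam : 0 < lam) (hg : 0 < g) (hω : ω = Real.sqrt (2 * lam * g))
    (c₁ c₂ c₃ c₄ c₅ : ℝ) (hc₂ : 0 < c₂)
    (t₁ t₂ : ℝ)
    (hcos : ∀ t ∈ Set.Ioo t₁ t₂, 0 < Real.cos (c₃ - ω * t))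
    (F₁ : ℝ → ℝ)
    (hF₁ : ∀ t ∈ Set.Ioo t₁ t₂,
      HasDerivAt F₁ (Real.cos (c₃ - ω * t) ^ (-(2 / n))) t)
    (f : ℝ → ℝ)
    (hf : ∀ t : ℝ, f t = -R * c₁ * c₂ ^ (-((n + 2) / (2 * n))) * ω ^ ((n + 2) / n)
      * (F₁ t + c₄) / Real.cos (c₃ - ω * t))
    (F₃ : ℝ → ℝ)
    (hF₃ : ∀ t ∈ Set.Ioo t₁ t₂, HasDerivAt F₃ (2 * f t / Real.cos (c₃ - ω * t)) t)
    (u ρ θ p : ℝ → ℝ → ℝ)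
    (hu : ∀ t a : ℝ, u t a = a * ω * Real.tan (c₃ - ω * t) + 2 * f t)
    (hρ : ∀ t a : ℝ, ρ t a = c₁ * ω ^ 2 * a / (c₂ * Real.cos (c₃ - ω * t) ^ 2)
      - c₁ * ω ^ 2 / (c₂ * Real.cos (c₃ - ω * t)) * (F₃ t + c₅))
    (hθ : ∀ t a : ℝ, θ t a = ρ t a
      * (c₂ * Real.cos (c₃ - ω * t) ^ 2 / ω ^ 2) ^ ((n - 2) / (2 * n)))
    (hp : ∀ t a : ℝ, p t a = R * ρ t a * θ t a) :
    ∀ t ∈ Set.Ioo t₁ t₂, ∀ a : ℝ,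
      (ρ t a * (deriv (fun s => u s a) t + u t a * deriv (u t) a)
        = -(deriv (p t) a) - 2 * ρ t a * g * lam * a)
      ∧ (deriv (fun s => ρ s a) t + deriv (fun b => ρ t b * u t b) a = 0)
      ∧ (R * ((n / 2) * ρ t a * (deriv (fun s => θ s a) t + u t a * deriv (θ t) a)
            - θ t a * (deriv (fun s => ρ s a) t + u t a * deriv (ρ t) a))
          = k * deriv (deriv (θ t)) a) := by
  intro t ht a
  have hω0 : 0 < ω := hω ▸ Real.sqrt_pos.mpr (by positivity)
  have hω2 : ω ^ 2 = 2 * lam * g := hω ▸ Real.sq_sqrt (by positivity)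
  have hC := hcos t ht
  have hu' : ∀ s b, u s b = ω * tan (c₃ - ω * s) * b + 2 * f s := fun s b => by
    rw [hu]; ring
  have hρ' : ∀ s b, ρ s b = c₁ * ω ^ 2 / c₂ / cos (c₃ - ω * s) ^ 2 * b
      + -(c₁ * ω ^ 2 / c₂) * (F₃ s + c₅) / cos (c₃ - ω * s) := fun s b => by
    rw [hρ]; ring
  have hα : HasDerivAt (fun s => ω * tan (c₃ - ω * s))
      (-((ω * tan (c₃ - ω * t)) ^ 2 + 2 * g * lam)) t :=
    (hasDerivAt_mul_tan_phase hC.ne').congr_deriv (by rw [hω2]; ring)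
  have hA := hasDerivAt_div_cos_sq_phase (c₁ * ω ^ 2 / c₂) hC.ne'
  have hB : HasDerivAt (fun s => -(c₁ * ω ^ 2 / c₂) * (F₃ s + c₅) / cos (c₃ - ω * s))
      (-(c₁ * ω ^ 2 / c₂ / cos (c₃ - ω * t) ^ 2 * (2 * f t)
        + -(c₁ * ω ^ 2 / c₂) * (F₃ t + c₅) / cos (c₃ - ω * t) * (ω * tan (c₃ - ω * t)))) t :=
    (hasDerivAt_div_cos_phase (((hF₃ t ht).add_const c₅).const_mul _) hC.ne').congr_deriv
      (by ring)
  have hG : HasDerivAt (fun s => (c₂ * cos (c₃ - ω * s) ^ 2 / ω ^ 2) ^ ((n - 2) / (2 * n)))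
      ((n - 2) / n * (c₂ * cos (c₃ - ω * t) ^ 2 / ω ^ 2) ^ ((n - 2) / (2 * n))
        * (ω * tan (c₃ - ω * t))) t :=
    (hasDerivAt_rpow_cos_sq_phase _ hc₂.ne' (pow_ne_zero 2 hω0.ne') hC.ne').congr_deriv
      (by ring)
  have hβ := hasDerivAt_two_mul_velocity_offset hn.ne' hc₂ hω0 hC (hF₁ t ht) hf
  exact ⟨momentum_eq R g lam hu' hρ' hθ hp hα hβ a, continuity_eq hu' hρ' hA hB a,
    entropy_eq n R k hn.ne' hu' hρ' hθ hA hB hG a⟩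

/-- The exact solution of the Euler system of an ideal gas on the curve
h(a) = λa² obtained from the quotient solution L = c₁(x/y)^m, M = (y/x)L,
K = √(c₂(x/y)^m − ω²), N = −(2y/n)K: with ω = √(2λg), on an open interval I
where cos(c₃ − ωt) > 0, the functions
u = aω tan(c₃−ωt) + 2f(t),
ρ = c₁ω²a/(c₂cos²(c₃−ωt)) − (c₁ω²/(c₂cos(c₃−ωt)))(F₃(t)+c₅),
θ = ρ · (c₂cos²(c₃−ωt)/ω²)^((n−2)/(2n)),
where f(t) = −Rc₁c₂^(−(n+2)/(2n))ω^((n+2)/n)(F₁(t)+c₄)/cos(c₃−ωt),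
F₁′ = cos^(−2/n)(c₃−ωt) and F₃′ = 2f/cos(c₃−ωt),
satisfy (with p = Rρθ) the Euler system
ρ(u_t + uu_a) = −p_a − 2ρgλa,  ρ_t + (ρu)_a = 0,
R((n/2)ρ(θ_t + uθ_a) − θ(ρ_t + uρ_a)) = kθ_aa. -/
theorem stmt11 (R k n lam g ω : ℝ) (hR : 0 < R) (hk : 0 < k) (hn : 0 < n)
    (hn2 : n ≠ 2) (hlam : 0 < lam) (hg : 0 < g) (hω : ω = Real.sqrt (2 * lam * g))
    (c₁ c₂ c₃ c₄ c₅ : ℝ) (hc₁ : c₁ ≠ 0) (hc₂ : 0 < c₂)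
    (t₁ t₂ : ℝ)
    (hcos : ∀ t ∈ Set.Ioo t₁ t₂, 0 < Real.cos (c₃ - ω * t))
    (F₁ : ℝ → ℝ)
    (hF₁ : ∀ t ∈ Set.Ioo t₁ t₂,
      HasDerivAt F₁ (Real.cos (c₃ - ω * t) ^ (-(2 / n))) t)
    (f : ℝ → ℝ)
    (hf : ∀ t : ℝ, f t = -R * c₁ * c₂ ^ (-((n + 2) / (2 * n))) * ω ^ ((n + 2) / n)
      * (F₁ t + c₄) / Real.cos (c₃ - ω * t))
    (F₃ : ℝ → ℝ)
    (hF₃ : ∀ t ∈ Set.Ioo t₁ t₂, HasDerivAt F₃ (2 * f t / Real.cos (c₃ - ω * t)) t)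
    (u ρ θ p : ℝ → ℝ → ℝ)
    (hu : ∀ t a : ℝ, u t a = a * ω * Real.tan (c₃ - ω * t) + 2 * f t)
    (hρ : ∀ t a : ℝ, ρ t a = c₁ * ω ^ 2 * a / (c₂ * Real.cos (c₃ - ω * t) ^ 2)
      - c₁ * ω ^ 2 / (c₂ * Real.cos (c₃ - ω * t)) * (F₃ t + c₅))
    (hθ : ∀ t a : ℝ, θ t a = ρ t a
      * (c₂ * Real.cos (c₃ - ω * t) ^ 2 / ω ^ 2) ^ ((n - 2) / (2 * n)))
    (hp : ∀ t a : ℝ, p t a = R * ρ t a * θ t a) :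
    ∀ t ∈ Set.Ioo t₁ t₂, ∀ a : ℝ,
      (ρ t a * (deriv (fun s => u s a) t + u t a * deriv (u t) a)
        = -(deriv (p t) a) - 2 * ρ t a * g * lam * a)
      ∧ (deriv (fun s => ρ s a) t + deriv (fun b => ρ t b * u t b) a = 0)
      ∧ (R * ((n / 2) * ρ t a * (deriv (fun s => θ s a) t + u t a * deriv (θ t) a)
            - θ t a * (deriv (fun s => ρ s a) t + u t a * deriv (ρ t) a))
          = k * deriv (deriv (θ t)) a) :=
  stmt11_general R k n lam g ω hn hlam hg hω c₁ c₂ c₃ c₄ c₅ hc₂ t₁ t₂ hcos F₁ hF₁ f hf F₃ hF₃ u ρ θ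
    p hu hρ hθ hp
end

section
/- Let R > 0, ω > 0 and let c₁ ≠ 0, c₂, c₃ be real constants. Let I ⊂ ℝ be an open interval and N₀ : I → ℝ a twice-differentiable function, nowhere zero, with c₁²Ry − N₀(y)² ≠ 0 on I, satisfying the ODE N₀′(y) = (c₁c₂Ry + (ω²y − c₃)N₀(y)) / (c₁²Ry − N₀(y)²). Define M₀ = c₁ (constant), K₀ = N₀′, and L₀ = (c₂ − c₁N₀′)/N₀. Then on I the quadruple (M₀, K₀, L₀, N₀) satisfies all four equations of the zeroth-order system: M₀M₀′ = 0; M₀N₀′ − N₀M₀′ − K₀M₀ = 0; (L₀N₀ + M₀K₀)(N₀L₀′ + M₀K₀′ + K₀L₀) = 0; and RM₀²(yL₀′ + M₀′ + L₀) − L₀′N₀² + M₀(K₀² + ω²) − L₀K₀N₀ = 0. -/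
/-!
With `M₀ = c₁` constant the first two equations are immediate. The first factor of the third
equation is the constant `L₀N₀ + c₁N₀′ = c₂`, and its second factor is the derivative of that
identity, so it vanishes by the product rule alone. For the fourth equation, differentiate the ODE
in the cleared form `(c₁²Ry − N₀²) N₀′ = c₁c₂Ry + (ω²y − c₃) N₀`, valid on a neighbourhood of `y`;
after multiplying by `N₀²` the equation is a linear combination of the ODE, its derivative and the
two identities for `L₀`.
-/

open Filter Topology

theorem hasDerivAt_eq_of_eventuallyEq {𝕜 F : Type*} [NontriviallyNormedField 𝕜]
    [NormedAddCommGroup F] [NormedSpace 𝕜 F] {f g : 𝕜 → F} {f' g' : F} {y : 𝕜}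
    (hf : HasDerivAt f f' y) (hg : HasDerivAt g g' y) (h : f =ᶠ[𝓝 y] g) : f' = g' :=
  (h.hasDerivAt_iff.mp hf).unique hg

section ZerothOrder

variable {R ω c₁ c₂ c₃ y : ℝ} {N : ℝ → ℝ}

theorem deriv_cleared_ode (hN : DifferentiableAt ℝ N y)
    (hN' : DifferentiableAt ℝ (deriv N) y)
    (hODE : ∀ᶠ z in 𝓝 y,
      (c₁ ^ 2 * R * z - N z ^ 2) * deriv N z = c₁ * c₂ * R * z + (ω ^ 2 * z - c₃) * N z) :
    (c₁ ^ 2 * R - 2 * N y * deriv N y) * deriv N y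
        + (c₁ ^ 2 * R * y - N y ^ 2) * deriv (deriv N) y
      = c₁ * c₂ * R + ω ^ 2 * N y + (ω ^ 2 * y - c₃) * deriv N y := by
  have hlhs : HasDerivAt (fun z => (c₁ ^ 2 * R * z - N z ^ 2) * deriv N z)
      ((c₁ ^ 2 * R - 2 * N y * deriv N y) * deriv N y
        + (c₁ ^ 2 * R * y - N y ^ 2) * deriv (deriv N) y) y := by
    have hsq : HasDerivAt (fun z => N z ^ 2) (2 * N y * deriv N y) y := by
      simpa using hN.hasDerivAt.fun_pow 2
    have hD := ((hasDerivAt_id y).const_mul (c₁ ^ 2 * R)).sub hsq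
    simp only [id, mul_one] at hD
    exact hD.mul hN'.hasDerivAt
  have hrhs : HasDerivAt (fun z => c₁ * c₂ * R * z + (ω ^ 2 * z - c₃) * N z)
      (c₁ * c₂ * R + (ω ^ 2 * N y + (ω ^ 2 * y - c₃) * deriv N y)) y := by
    have hlin := ((hasDerivAt_id y).const_mul (ω ^ 2)).sub_const c₃
    simp only [id, mul_one] at hlin
    have hconst := (hasDerivAt_id y).const_mul (c₁ * c₂ * R)
    simp only [id, mul_one] at hconst
    exact hconst.add (hlin.mul hN.hasDerivAt)
  rw [hasDerivAt_eq_of_eventuallyEq hlhs hrhs hODE]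
  ring

/-- The derivative of the identity `L · N = c₂ − c₁ N′` for `L = (c₂ − c₁ N′) / N`. -/
theorem deriv_div_mul_add (hN : DifferentiableAt ℝ N y) (hN' : DifferentiableAt ℝ (deriv N) y)
    (hNy : N y ≠ 0) :
    deriv (fun z => (c₂ - c₁ * deriv N z) / N z) y * N y
        + (c₂ - c₁ * deriv N y) / N y * deriv N y
      = -(c₁ * deriv (deriv N) y) := by
  have hnum : HasDerivAt (fun z => c₂ - c₁ * deriv N z) (-(c₁ * deriv (deriv N) y)) y := by
    simpa using (hN'.hasDerivAt.const_mul c₁).const_sub c₂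
  rw [(hnum.fun_div hN.hasDerivAt hNy).deriv]
  field_simp
  ring

end ZerothOrder

theorem zeroth_order_fourth_eq_of_cleared_ode {R ω c₁ c₂ c₃ y n p q l L : ℝ} (hn : n ≠ 0)
    (hL : L * n = c₂ - c₁ * p)
    (hl : l * n + L * p = -(c₁ * q))
    (hODE : (c₁ ^ 2 * R * y - n ^ 2) * p = c₁ * c₂ * R * y + (ω ^ 2 * y - c₃) * n)
    (hODE' : (c₁ ^ 2 * R - 2 * n * p) * p + (c₁ ^ 2 * R * y - n ^ 2) * q
      = c₁ * c₂ * R + ω ^ 2 * n + (ω ^ 2 * y - c₃) * p) :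
    R * c₁ ^ 2 * (y * l + L) - l * n ^ 2 + c₁ * (p ^ 2 + ω ^ 2) - L * p * n = 0 := by
  have hn2 : n ^ 2 ≠ 0 := pow_ne_zero 2 hn
  refine (mul_eq_zero.mp ?_).resolve_right hn2
  linear_combination n * (c₁ ^ 2 * R * y - n ^ 2) * hl - c₁ * n * hODE'
    + (n * (R * c₁ ^ 2 - p * n) - (c₁ ^ 2 * R * y - n ^ 2) * p) * hL + c₁ * p * hODE

theorem stmt13_general (R ω c₁ c₂ c₃ : ℝ)
    (a b : ℝ) (N₀ : ℝ → ℝ)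
    (hNdiff : ∀ y ∈ Set.Ioo a b, DifferentiableAt ℝ N₀ y)
    (hNdiff2 : ∀ y ∈ Set.Ioo a b, DifferentiableAt ℝ (deriv N₀) y)
    (hN0 : ∀ y ∈ Set.Ioo a b, N₀ y ≠ 0)
    (hden : ∀ y ∈ Set.Ioo a b, c₁ ^ 2 * R * y - N₀ y ^ 2 ≠ 0)
    (hODE : ∀ y ∈ Set.Ioo a b,
      deriv N₀ y = (c₁ * c₂ * R * y + (ω ^ 2 * y - c₃) * N₀ y)
        / (c₁ ^ 2 * R * y - N₀ y ^ 2))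
    (M₀ K₀ L₀ : ℝ → ℝ)
    (hM : ∀ y : ℝ, M₀ y = c₁)
    (hK : ∀ y : ℝ, K₀ y = deriv N₀ y)
    (hL : ∀ y : ℝ, L₀ y = (c₂ - c₁ * deriv N₀ y) / N₀ y) :
    ∀ y ∈ Set.Ioo a b,
      (M₀ y * deriv M₀ y = 0)
      ∧ (M₀ y * deriv N₀ y - N₀ y * deriv M₀ y - K₀ y * M₀ y = 0)
      ∧ ((L₀ y * N₀ y + M₀ y * K₀ y)
          * (N₀ y * deriv L₀ y + M₀ y * deriv K₀ y + K₀ y * L₀ y) = 0)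
      ∧ (R * M₀ y ^ 2 * (y * deriv L₀ y + deriv M₀ y + L₀ y)
          - deriv L₀ y * N₀ y ^ 2 + M₀ y * (K₀ y ^ 2 + ω ^ 2)
          - L₀ y * K₀ y * N₀ y = 0) := by
  intro y hy
  obtain rfl : M₀ = fun _ => c₁ := funext hM
  obtain rfl : K₀ = deriv N₀ := funext hK
  obtain rfl : L₀ = fun z => (c₂ - c₁ * deriv N₀ z) / N₀ z := funext hL
  have hcleared : ∀ᶠ z in 𝓝 y,
      (c₁ ^ 2 * R * z - N₀ z ^ 2) * deriv N₀ z = c₁ * c₂ * R * z + (ω ^ 2 * z - c₃) * N₀ z :=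
    eventually_of_mem (isOpen_Ioo.mem_nhds hy) fun z hz => by
      rw [hODE z hz, mul_div_cancel₀ _ (hden z hz)]
  have hNy := hN0 y hy
  have hl := deriv_div_mul_add (c₁ := c₁) (c₂ := c₂) (hNdiff y hy) (hNdiff2 y hy) hNy
  have hODE' := deriv_cleared_ode (hNdiff y hy) (hNdiff2 y hy) hcleared
  simp only [deriv_const', mul_zero, sub_zero, add_zero]
  refine ⟨trivial, by ring, mul_eq_zero_of_right _ (by linear_combination hl), ?_⟩
  exact zeroth_order_fourth_eq_of_cleared_ode hNy (div_mul_cancel₀ _ hNy) hl hcleared.self_of_nhds hODE'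

/-- If N₀ is twice differentiable, nowhere zero, with c₁²Ry − N₀(y)² ≠ 0,
and satisfies the flow-temperature ODE
N₀′ = (c₁c₂Ry + (ω²y − c₃)N₀)/(c₁²Ry − N₀²), then M₀ = c₁, K₀ = N₀′,
L₀ = (c₂ − c₁N₀′)/N₀ satisfy all four zeroth-order virial-expansion
equations of the quotient of the Euler system. -/
theorem stmt13 (R ω c₁ c₂ c₃ : ℝ) (hR : 0 < R) (hω : 0 < ω) (hc₁ : c₁ ≠ 0)
    (a b : ℝ) (N₀ : ℝ → ℝ)
    (hNdiff : ∀ y ∈ Set.Ioo a b, DifferentiableAt ℝ N₀ y)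
    (hNdiff2 : ∀ y ∈ Set.Ioo a b, DifferentiableAt ℝ (deriv N₀) y)
    (hN0 : ∀ y ∈ Set.Ioo a b, N₀ y ≠ 0)
    (hden : ∀ y ∈ Set.Ioo a b, c₁ ^ 2 * R * y - N₀ y ^ 2 ≠ 0)
    (hODE : ∀ y ∈ Set.Ioo a b,
      deriv N₀ y = (c₁ * c₂ * R * y + (ω ^ 2 * y - c₃) * N₀ y)
        / (c₁ ^ 2 * R * y - N₀ y ^ 2))
    (M₀ K₀ L₀ : ℝ → ℝ)
    (hM : ∀ y : ℝ, M₀ y = c₁)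
    (hK : ∀ y : ℝ, K₀ y = deriv N₀ y)
    (hL : ∀ y : ℝ, L₀ y = (c₂ - c₁ * deriv N₀ y) / N₀ y) :
    ∀ y ∈ Set.Ioo a b,
      (M₀ y * deriv M₀ y = 0)
      ∧ (M₀ y * deriv N₀ y - N₀ y * deriv M₀ y - K₀ y * M₀ y = 0)
      ∧ ((L₀ y * N₀ y + M₀ y * K₀ y)
          * (N₀ y * deriv L₀ y + M₀ y * deriv K₀ y + K₀ y * L₀ y) = 0)
      ∧ (R * M₀ y ^ 2 * (y * deriv L₀ y + deriv M₀ y + L₀ y)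
          - deriv L₀ y * N₀ y ^ 2 + M₀ y * (K₀ y ^ 2 + ω ^ 2)
          - L₀ y * K₀ y * N₀ y = 0) :=
  stmt13_general R ω c₁ c₂ c₃ a b N₀ hNdiff hNdiff2 hN0 hden hODE M₀ K₀ L₀ hM hK hL
end
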